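/- Let f(u) = e^u − u − 1 and for x > 2 let ζ(x) > 0 be the unique positive solution of u(e^u − 1)/f(u) = x. Then ζ is differentiable on (2, ∞) with dζ/dx = f(ζ(x))² / ((e^{ζ(x)} − 1)² − ζ(x)² e^{ζ(x)}), and in particular dζ/dx > 0 for all x > 2. -/

import Mathlib

/-!
The map `g(u) = u (e^u - 1) / (e^u - u - 1)` has derivative `((e^u - 1)² - u² e^u) / f(u)²` on
`(0, ∞)`, and the numerator is positive there because `e^u - 1 = 2 sinh(u/2) e^{u/2}` with
`sinh(u/2) > u/2`. So `g` is strictly increasing on `(0, ∞)`, `ζ` is a left inverse of `g` near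
each `ζ(x)`, and the inverse function theorem gives `ζ'(x) = 1 / g'(ζ(x))`.
-/

open Real Filter Set
open scoped Topology

theorem HasStrictDerivAt.of_rightInverse_injOn {𝕜 : Type*} [NontriviallyNormedField 𝕜]
    [CompleteSpace 𝕜] {g ζ : 𝕜 → 𝕜} {g' a : 𝕜} {s t : Set 𝕜}
    (hg : HasStrictDerivAt g g' a) (hg' : g' ≠ 0) (hs : s ∈ 𝓝 a) (ht : t ∈ 𝓝 (g a))
    (hinj : InjOn g s) (hζ : ∀ y ∈ t, ζ y ∈ s ∧ g (ζ y) = y) :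
    HasStrictDerivAt ζ g'⁻¹ (g a) := by
  refine hg.to_local_left_inverse hg' ?_
  filter_upwards [hs, hg.hasDerivAt.continuousAt.preimage_mem_nhds ht] with u hu hgu
  exact hinj (hζ (g u) hgu).1 hu (hζ (g u) hgu).2

theorem sq_mul_exp_lt_sq_exp_sub_one {u : ℝ} (hu : 0 < u) :
    u ^ 2 * exp u < (exp u - 1) ^ 2 := by
  have hsinh : u / 2 < sinh (u / 2) := self_lt_sinh_iff.mpr (by positivity)
  have hexp : exp u = exp (u / 2) ^ 2 := by rw [← exp_nat_mul]; ring_nf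
  have hsub : exp u - 1 = 2 * sinh (u / 2) * exp (u / 2) := by
    rw [sinh_eq, hexp, exp_neg]
    field_simp
  rw [hsub, hexp, ← mul_pow]
  gcongr
  linarith

theorem exp_sub_self_sub_one_pos {u : ℝ} (hu : u ≠ 0) : 0 < exp u - u - 1 := by
  linarith [add_one_lt_exp hu]

noncomputable def expRatio (u : ℝ) : ℝ := u * (exp u - 1) / (exp u - u - 1)

theorem hasStrictDerivAt_expRatio {u : ℝ} (hu : 0 < u) :
    HasStrictDerivAt expRatio
      (((exp u - 1) ^ 2 - u ^ 2 * exp u) / (exp u - u - 1) ^ 2) u := by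
  have hnum : HasStrictDerivAt (fun v => v * (exp v - 1)) (1 * (exp u - 1) + u * exp u) u :=
    (hasStrictDerivAt_id u).mul ((hasStrictDerivAt_exp u).sub_const 1)
  have hden : HasStrictDerivAt (fun v => exp v - v - 1) (exp u - 1) u :=
    ((hasStrictDerivAt_exp u).sub (hasStrictDerivAt_id u)).sub_const 1
  refine (hnum.div hden (exp_sub_self_sub_one_pos hu.ne').ne').congr_deriv ?_
  field_simp
  ring

theorem strictMonoOn_expRatio : StrictMonoOn expRatio (Ioi 0) := by
  refine strictMonoOn_of_deriv_pos (convex_Ioi 0)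
    (fun u hu => (hasStrictDerivAt_expRatio hu).hasDerivAt.continuousAt.continuousWithinAt) ?_
  intro u hu
  rw [interior_Ioi] at hu
  rw [(hasStrictDerivAt_expRatio hu).hasDerivAt.deriv]
  exact div_pos (by linarith [sq_mul_exp_lt_sq_exp_sub_one hu])
    (pow_pos (exp_sub_self_sub_one_pos hu.ne') 2)

/-- With `f(u) = e^u - u - 1` and `ζ(x)` the unique positive root of
`ζ(e^ζ-1)/f(ζ) = x` for `x > 2`, the function `ζ` is differentiable on `(2, ∞)` with
`ζ'(x) = f(ζ(x))² / ((e^{ζ(x)}-1)² - ζ(x)² e^{ζ(x)}) > 0`. -/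
theorem stmt_12 (f ζ : ℝ → ℝ)
    (hf : ∀ u, f u = Real.exp u - u - 1)
    (hζ : ∀ x > 2, 0 < ζ x ∧ ζ x * (Real.exp (ζ x) - 1) / f (ζ x) = x) :
    ∀ x > 2,
      HasDerivAt ζ
        (f (ζ x) ^ 2 / ((Real.exp (ζ x) - 1) ^ 2 - ζ x ^ 2 * Real.exp (ζ x))) x ∧
      0 < f (ζ x) ^ 2 / ((Real.exp (ζ x) - 1) ^ 2 - ζ x ^ 2 * Real.exp (ζ x)) := by
  have hroot : ∀ y ∈ Ioi 2, ζ y ∈ Ioi 0 ∧ expRatio (ζ y) = y := fun y hy => by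
    simpa [expRatio, hf] using hζ y hy
  intro x hx
  obtain ⟨hpos, hgx⟩ := hroot x hx
  have hD : 0 < (exp (ζ x) - 1) ^ 2 - ζ x ^ 2 * exp (ζ x) := by
    linarith [sq_mul_exp_lt_sq_exp_sub_one hpos]
  have hF : 0 < f (ζ x) := hf _ ▸ exp_sub_self_sub_one_pos hpos.ne'
  refine ⟨?_, by positivity⟩
  have hderiv := (hasStrictDerivAt_expRatio hpos).of_rightInverse_injOn
    (by rw [← hf]; positivity) (Ioi_mem_nhds hpos) (by rw [hgx]; exact Ioi_mem_nhds hx)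
    strictMonoOn_expRatio.injOn hroot
  rw [hgx, inv_div, ← hf] at hderiv
  exact hderiv.hasDerivAt
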